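/- arXiv:2208.14714 — 3 statements merged into one kernel-verified Lean document; each statement's English description precedes it below -/
import Mathlib

section
/- Let Γ ∈ ℝ^{p×p} be symmetric positive definite, let V : ℝⁿ × ℝᵖ → ℝ be smooth and nonnegative, and let μ : ℝⁿ × ℝᵖ → ℝᵐ and ν : ℝⁿ × ℝᵖ → ℝ≥0 satisfy, for all x ∈ ℝⁿ and ϑ ∈ ℝᵖ, ⟨∇ₓV(x,ϑ), f(x) + F(x)(ϑ + Γ ∇_ϑ V(x,ϑ)) + g(x) μ(x,ϑ)⟩ ≤ −ν(x,ϑ). Fix θ ∈ ℝᵖ and let x : I → ℝⁿ and θ̂ : I → ℝᵖ be differentiable on an interval I and satisfy the closed-loop equations ẋ(t) = f(x(t)) + F(x(t))θ + g(x(t)) μ(x(t), θ̂(t)) and θ̂'(t) = Γ F(x(t))ᵀ ∇ₓV(x(t), θ̂(t)). Then the function V_c(t) := V(x(t), θ̂(t)) + ½ (θ − θ̂(t))ᵀ Γ⁻¹ (θ − θ̂(t)) is differentiable and satisfies V_c'(t) ≤ −ν(x(t), θ̂(t)) for all t ∈ I. -/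
open scoped RealInnerProductSpace
open Set Matrix

noncomputable section

/-- `ℝⁿ` with the Euclidean norm. -/
abbrev Evec (n : ℕ) := EuclideanSpace ℝ (Fin n)

/-- Action of a real `m × n` matrix on a Euclidean vector. -/
noncomputable def mVec {m n : ℕ} (A : Matrix (Fin m) (Fin n) ℝ) (v : Evec n) : Evec m :=
  (EuclideanSpace.equiv (Fin m) ℝ).symm (A.mulVec ((EuclideanSpace.equiv (Fin n) ℝ) v))

noncomputable def mVecCLM {m n : ℕ} (A : Matrix (Fin m) (Fin n) ℝ) : Evec n →L[ℝ] Evec m :=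
  LinearMap.toContinuousLinearMap <|
    (((EuclideanSpace.equiv (Fin m) ℝ).symm.toLinearEquiv.toLinearMap.comp A.mulVecLin).comp
      (EuclideanSpace.equiv (Fin n) ℝ).toLinearEquiv.toLinearMap)

lemma mVecCLM_apply {m n : ℕ} (A : Matrix (Fin m) (Fin n) ℝ) (v : Evec n) :
    mVecCLM A v = mVec A v := rfl

lemma mVec_add {m n : ℕ} (A : Matrix (Fin m) (Fin n) ℝ) (u v : Evec n) :
    mVec A (u + v) = mVec A u + mVec A v := by
  rw [← mVecCLM_apply, ← mVecCLM_apply, ← mVecCLM_apply, map_add]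

lemma mVec_neg {m n : ℕ} (A : Matrix (Fin m) (Fin n) ℝ) (u : Evec n) :
    mVec A (-u) = -mVec A u := by
  rw [← mVecCLM_apply, ← mVecCLM_apply, map_neg]

lemma mVec_sub {m n : ℕ} (A : Matrix (Fin m) (Fin n) ℝ) (u v : Evec n) :
    mVec A (u - v) = mVec A u - mVec A v := by
  rw [← mVecCLM_apply, ← mVecCLM_apply, ← mVecCLM_apply, map_sub]

lemma mVec_mVec {m n k : ℕ} (A : Matrix (Fin m) (Fin n) ℝ) (B : Matrix (Fin n) (Fin k) ℝ)
    (v : Evec k) : mVec A (mVec B v) = mVec (A * B) v := by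
  simp only [mVec, ContinuousLinearEquiv.apply_symm_apply, Matrix.mulVec_mulVec]

lemma mVec_one {n : ℕ} (v : Evec n) : mVec (1 : Matrix (Fin n) (Fin n) ℝ) v = v := by
  simp [mVec]

lemma inner_mVec {k l : ℕ} (A : Matrix (Fin k) (Fin l) ℝ) (u : Evec l) (v : Evec k) :
    ⟪mVec A u, v⟫ = ⟪u, mVec Aᵀ v⟫ := by
  simp only [mVec, PiLp.inner_apply, RCLike.inner_apply, starRingEnd_apply, star_trivial]
  simp only [EuclideanSpace.equiv, ContinuousLinearEquiv.symm_apply_apply]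
  show ∑ i, v.ofLp i * A.mulVec u.ofLp i = ∑ j, Aᵀ.mulVec v.ofLp j * u.ofLp j
  simp only [Matrix.mulVec, dotProduct, Finset.sum_mul, Finset.mul_sum,
    Matrix.transpose_apply]
  rw [Finset.sum_comm]
  exact Finset.sum_congr rfl fun i _ => Finset.sum_congr rfl fun j _ => by ring

lemma grad_inner {k : ℕ} {f : Evec k → ℝ} {L : Evec k →L[ℝ] ℝ} {x a : Evec k}
    (h : HasFDerivAt f L x) : ⟪gradient f x, a⟫ = L a := by
  rw [h.hasGradientAt.gradient, InnerProductSpace.toDual_symm_apply]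

/-- Along any closed-loop solution of the adaptive system, the composite Lyapunov
function `V_c(t) = V(x,θ̂) + ½ θ̃ᵀ Γ⁻¹ θ̃` is differentiable with `V_c' ≤ -ν(x,θ̂)`. -/
theorem stmt0
    {n m p : ℕ}
    (f : Evec n → Evec n) (F : Evec n → Matrix (Fin n) (Fin p) ℝ)
    (g : Evec n → Matrix (Fin n) (Fin m) ℝ)
    (Γ : Matrix (Fin p) (Fin p) ℝ) (hΓ : Γ.PosDef)
    (V : Evec n → Evec p → ℝ)
    (hV : ContDiff ℝ (⊤ : ℕ∞) (fun q : Evec n × Evec p => V q.1 q.2))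
    (hVnn : ∀ x ϑ, 0 ≤ V x ϑ)
    (μ : Evec n → Evec p → Evec m) (ν : Evec n → Evec p → ℝ)
    (hνnn : ∀ x ϑ, 0 ≤ ν x ϑ)
    (hACLF : ∀ x ϑ,
      ⟪gradient (fun y => V y ϑ) x,
        f x + mVec (F x) (ϑ + mVec Γ (gradient (fun ϑ' => V x ϑ') ϑ))
          + mVec (g x) (μ x ϑ)⟫ ≤ -(ν x ϑ))
    (θ : Evec p) (I : Set ℝ) (hI : I.OrdConnected)
    (x : ℝ → Evec n) (θh : ℝ → Evec p)
    (hx : ∀ t ∈ I, HasDerivWithinAt x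
      (f (x t) + mVec (F (x t)) θ + mVec (g (x t)) (μ (x t) (θh t))) I t)
    (hθ : ∀ t ∈ I, HasDerivWithinAt θh
      (mVec Γ (mVec (F (x t))ᵀ (gradient (fun y => V y (θh t)) (x t)))) I t) :
    ∀ t ∈ I, ∃ d : ℝ,
      HasDerivWithinAt
        (fun s => V (x s) (θh s) + (1/2) * ⟪θ - θh s, mVec Γ⁻¹ (θ - θh s)⟫) d I t
      ∧ d ≤ -(ν (x t) (θh t)) := by
  -- basic facts about Γ
  have hΓsymm : Γᵀ = Γ := by
    have := hΓ.1.eq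
    rw [← Matrix.conjTranspose_eq_transpose_of_trivial]; exact hΓ.1.eq
  have hΓinv_symm : (Γ⁻¹)ᵀ = Γ⁻¹ := by
    rw [Matrix.transpose_nonsing_inv, hΓsymm]
  have hΓunit : IsUnit Γ.det := (Ne.isUnit hΓ.det_pos.ne')
  have hinvΓ : Γ⁻¹ * Γ = 1 := Matrix.nonsing_inv_mul Γ hΓunit
  intro t ht
  set xt := x t with hxt
  set ϑt := θh t with hϑt
  set gx := gradient (fun y => V y ϑt) xt with hgx_def
  set gϑ := gradient (fun ϑ' => V xt ϑ') ϑt with hgϑ_def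
  set A := F xt with hA
  set xd := f xt + mVec A θ + mVec (g xt) (μ xt ϑt) with hxd
  set ϑ' := mVec Γ (mVec Aᵀ gx) with hϑ'
  -- derivative of V along the trajectory
  have hVd : DifferentiableAt ℝ (fun q : Evec n × Evec p => V q.1 q.2) (xt, ϑt) :=
    (hV.differentiable (by simp)).differentiableAt
  set D := fderiv ℝ (fun q : Evec n × Evec p => V q.1 q.2) (xt, ϑt) with hD_def
  have hD : HasFDerivAt (fun q : Evec n × Evec p => V q.1 q.2) D (xt, ϑt) := hVd.hasFDerivAt
  have hDx : HasFDerivAt (fun y => V y ϑt) (D.comp (ContinuousLinearMap.inl ℝ _ _)) xt :=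
    hD.comp (f := fun y : Evec n => (y, ϑt)) xt (hasFDerivAt_prodMk_left (𝕜 := ℝ) xt ϑt)
  have hDϑ : HasFDerivAt (fun ϑ'' => V xt ϑ'') (D.comp (ContinuousLinearMap.inr ℝ _ _)) ϑt :=
    hD.comp (f := fun y : Evec p => (xt, y)) ϑt (hasFDerivAt_prodMk_right (𝕜 := ℝ) xt ϑt)
  have hgx : ∀ a, ⟪gx, a⟫ = D (a, 0) := fun a => by
    rw [hgx_def, grad_inner hDx]; rfl
  have hgϑ : ∀ b, ⟪gϑ, b⟫ = D (0, b) := fun b => by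
    rw [hgϑ_def, grad_inner hDϑ]; rfl
  have hq : HasDerivWithinAt (fun s => (x s, θh s)) (xd, ϑ') I t :=
    (hx t ht).prodMk (hθ t ht)
  have h1 : HasDerivWithinAt (fun s => V (x s) (θh s)) (D (xd, ϑ')) I t :=
    hD.comp_hasDerivWithinAt (f := fun s => (x s, θh s)) t hq
  -- derivative of the quadratic term
  have hw : HasDerivWithinAt (fun s => θ - θh s) (-ϑ') I t := (hθ t ht).const_sub θ
  have hGw : HasDerivWithinAt (fun s => mVec Γ⁻¹ (θ - θh s)) (mVec Γ⁻¹ (-ϑ')) I t := by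
    have := (mVecCLM Γ⁻¹).hasFDerivAt.comp_hasDerivWithinAt t hw
    simpa only [mVecCLM_apply, Function.comp_def] using this
  have h2 : HasDerivWithinAt (fun s => ⟪θ - θh s, mVec Γ⁻¹ (θ - θh s)⟫)
      (⟪θ - ϑt, mVec Γ⁻¹ (-ϑ')⟫ + ⟪-ϑ', mVec Γ⁻¹ (θ - ϑt)⟫) I t := hw.inner ℝ hGw
  refine ⟨_, h1.add (h2.const_mul (1/2 : ℝ)), ?_⟩
  -- now show the derivative equals the ACLF expression
  have key : D (xd, ϑ') + (1/2) * (⟪θ - ϑt, mVec Γ⁻¹ (-ϑ')⟫ + ⟪-ϑ', mVec Γ⁻¹ (θ - ϑt)⟫)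
      = ⟪gx, f xt + mVec A (ϑt + mVec Γ gϑ) + mVec (g xt) (μ xt ϑt)⟫ := by
    have hsplit : D (xd, ϑ') = ⟪gx, xd⟫ + ⟪gϑ, ϑ'⟫ := by
      rw [hgx, hgϑ, ← map_add]
      congr 1
      simp
    -- second quadratic term equals the first
    have hsym : ⟪-ϑ', mVec Γ⁻¹ (θ - ϑt)⟫ = ⟪θ - ϑt, mVec Γ⁻¹ (-ϑ')⟫ := by
      rw [real_inner_comm, inner_mVec, hΓinv_symm]
    have hquad : ⟪θ - ϑt, mVec Γ⁻¹ (-ϑ')⟫ = -⟪gx, mVec A (θ - ϑt)⟫ := by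
      rw [hϑ', mVec_neg, mVec_mVec, hinvΓ, mVec_one, inner_neg_right, real_inner_comm,
        inner_mVec, Matrix.transpose_transpose]
    have hmid : ⟪gϑ, ϑ'⟫ = ⟪gx, mVec A (mVec Γ gϑ)⟫ := by
      rw [hϑ', real_inner_comm, inner_mVec, hΓsymm, inner_mVec, Matrix.transpose_transpose,
        real_inner_comm]
    rw [hsplit, hsym, hquad, hmid, hxd]
    simp only [mVec_add, mVec_sub, inner_add_right, inner_sub_right]
    ring
  rw [key]
  exact hACLF xt ϑt
end
end

section
/- Let R* > 0, let q₁ be a class-K∞ function, v* > 0, and let φ : ℝⁿ → ℝˡ satisfy q₁(‖y‖) ≤ ⟨w, φ(y)⟩ for all y in the closed ball B_{R*} and all w in a set 𝕎 ⊂ {w : ‖w‖ ≤ w̄}, and be Lipschitz with constant L_φ on B_{R*}. Let Γ ∈ ℝ^{p×p} be symmetric positive definite, θ, θ̂_k ∈ ℝᵖ, w_k ∈ 𝕎, and let D : ℝⁿ → ℝⁿ be continuous with ‖D(y)‖ ≤ F̄ on B_{R*}. Let δ > 0 and x : [0,δ] → B_{R*} be continuous with x(t) = x_k + ∫₀ᵗ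 D(x(s)) ds. If ⟨w_k, φ(x_k)⟩ + ½ (θ − θ̂_k)ᵀ Γ⁻¹ (θ − θ̂_k) ≤ 3v*/4 and w̄ L_φ δ F̄ ≤ v*/4, then for all t ∈ [0,δ] one has q₁(‖x(t)‖) ≤ v*, i.e. ‖x(t)‖ ≤ q₁⁻¹(v*). -/
open scoped RealInnerProductSpace
open Set Matrix Metric

noncomputable section

/-- A class-`K` function: continuous, strictly increasing on `[0,∞)` and vanishing at `0`. -/
def IsClassK (α : ℝ → ℝ) : Prop :=
  ContinuousOn α (Ici 0) ∧ StrictMonoOn α (Ici 0) ∧ α 0 = 0 ∧ ∀ s ≥ (0:ℝ), 0 ≤ α s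

/-- A class-`K∞` function: class `K` and unbounded. -/
def IsClassKInf (α : ℝ → ℝ) : Prop :=
  IsClassK α ∧ Filter.Tendsto α Filter.atTop Filter.atTop

/-! The decisive estimate is that `t ↦ ⟪w_k, φ(x t)⟫` moves by at most `w̄ L_φ δ F̄ ≤ v*/4` over the
sampling interval: the state drifts by at most `δ F̄` (the integral equation with `‖D‖ ≤ F̄`), `φ`
converts this into `L_φ δ F̄`, and Cauchy–Schwarz with `‖w_k‖ ≤ w̄` does the rest. Since the
quadratic part of the composite Lyapunov function is nonnegative, `⟪w_k, φ x_k⟫ ≤ 3v*/4`, hence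
`q₁ ‖x t‖ ≤ ⟪w_k, φ (x t)⟫ ≤ v*`. -/

lemma inner_mVec_nonneg_of_posSemidef {p : ℕ} {A : Matrix (Fin p) (Fin p) ℝ}
    (hA : A.PosSemidef) (v : Evec p) : 0 ≤ ⟪v, mVec A v⟫ := by
  simpa [mVec, PiLp.inner_apply, dotProduct, mulVec, mul_comm] using
    hA.dotProduct_mulVec_nonneg (EuclideanSpace.equiv (Fin p) ℝ v)

lemma norm_sub_le_of_eq_add_integral {E : Type*} [NormedAddCommGroup E] [NormedSpace ℝ E]
    {f : ℝ → E} {x₀ y : E} {C t δ : ℝ} (hy : y = x₀ + ∫ s in (0:ℝ)..t, f s)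
    (ht : t ∈ Icc 0 δ) (hf : ∀ s ∈ Ioc 0 δ, ‖f s‖ ≤ C) (hC : 0 ≤ C) :
    ‖y - x₀‖ ≤ C * δ := by
  rw [hy, add_sub_cancel_left]
  calc ‖∫ s in (0:ℝ)..t, f s‖ ≤ C * |t - 0| :=
        intervalIntegral.norm_integral_le_of_norm_le_const fun s hs =>
          hf s (Ioc_subset_Ioc_right ht.2 (uIoc_of_le ht.1 ▸ hs))
    _ ≤ C * δ := by rw [sub_zero, abs_of_nonneg ht.1]; exact mul_le_mul_of_nonneg_left ht.2 hC

lemma inner_le_inner_add_of_norm_sub_le {E F : Type*} [NormedAddCommGroup E]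
    [NormedAddCommGroup F] [InnerProductSpace ℝ F] {φ : E → F} {w : F} {y y' : E}
    {b L r ε : ℝ} (hw : ‖w‖ ≤ b) (hφ : ‖φ y - φ y'‖ ≤ L * ‖y - y'‖) (hyy : ‖y - y'‖ ≤ r)
    (hε : b * L * r ≤ ε) (hε₀ : 0 ≤ ε) : ⟪w, φ y⟫ ≤ ⟪w, φ y'⟫ + ε := by
  rcases eq_or_ne y y' with rfl | hne
  · linarith
  have hL : 0 ≤ L :=
    nonneg_of_mul_nonneg_left ((norm_nonneg _).trans hφ) (norm_pos_iff.mpr (sub_ne_zero.mpr hne))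
  have hb : 0 ≤ b := (norm_nonneg w).trans hw
  calc ⟪w, φ y⟫ = ⟪w, φ y'⟫ + ⟪w, φ y - φ y'⟫ := by rw [inner_sub_right]; ring
    _ ≤ ⟪w, φ y'⟫ + ‖w‖ * ‖φ y - φ y'‖ := by gcongr; exact real_inner_le_norm _ _
    _ ≤ ⟪w, φ y'⟫ + b * (L * r) := by gcongr; exact hφ.trans (by gcongr)
    _ ≤ ⟪w, φ y'⟫ + ε := by linarith

theorem stmt9_general
    {n p l : ℕ} (Rs : ℝ)
    (q₁ : ℝ → ℝ) (vs : ℝ) (hvs : 0 < vs)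
    (φ : Evec n → Evec l) (W : Set (Evec l)) (wb : ℝ)
    (hWb : ∀ w ∈ W, ‖w‖ ≤ wb)
    (hφlb : ∀ y ∈ closedBall (0:Evec n) Rs, ∀ w ∈ W, q₁ ‖y‖ ≤ ⟪w, φ y⟫)
    (Lφ : ℝ)
    (hLφ : ∀ y ∈ closedBall (0:Evec n) Rs, ∀ y' ∈ closedBall (0:Evec n) Rs,
      ‖φ y - φ y'‖ ≤ Lφ * ‖y - y'‖)
    (Γ : Matrix (Fin p) (Fin p) ℝ) (hΓ : Γ.PosDef)
    (θ θhk : Evec p) (wk : Evec l) (hwk : wk ∈ W)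
    (D : Evec n → Evec n) (Fb : ℝ)
    (hDb : ∀ y ∈ closedBall (0:Evec n) Rs, ‖D y‖ ≤ Fb)
    (δ : ℝ)
    (xk : Evec n) (x : ℝ → Evec n)
    (hxball : ∀ t ∈ Icc (0:ℝ) δ, x t ∈ closedBall (0:Evec n) Rs)
    (hxeq : ∀ t ∈ Icc (0:ℝ) δ, x t = xk + ∫ s in (0:ℝ)..t, D (x s))
    (hVc : ⟪wk, φ xk⟫ + (1/2) * ⟪θ - θhk, mVec Γ⁻¹ (θ - θhk)⟫ ≤ 3 * vs / 4)
    (hδsmall : wb * Lφ * δ * Fb ≤ vs / 4) :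
    ∀ t ∈ Icc (0:ℝ) δ, q₁ ‖x t‖ ≤ vs := by
  intro t ht
  have hxt := hxball t ht
  have hxk : xk ∈ closedBall (0:Evec n) Rs := by
    have h0 : (0:ℝ) ∈ Icc 0 δ := ⟨le_rfl, ht.1.trans ht.2⟩
    simpa [hxeq 0 h0] using hxball 0 h0
  have hFb : 0 ≤ Fb := (norm_nonneg _).trans (hDb _ hxt)
  have hdrift : ‖x t - xk‖ ≤ Fb * δ :=
    norm_sub_le_of_eq_add_integral (hxeq t ht) ht
      (fun s hs => hDb _ (hxball s (Ioc_subset_Icc_self hs))) hFb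
  have hquad := inner_mVec_nonneg_of_posSemidef hΓ.inv.posSemidef (θ - θhk)
  have hpert : ⟪wk, φ (x t)⟫ ≤ ⟪wk, φ xk⟫ + vs / 4 :=
    inner_le_inner_add_of_norm_sub_le (hWb wk hwk) (hLφ _ hxt _ hxk) hdrift
      (by linarith) (by linarith)
  linarith [hφlb _ hxt wk hwk]

/-- Once the composite Lyapunov value is below `3v*/4` at a sampling instant, the state
stays in the target sublevel set `q₁(‖x‖) ≤ v*` throughout the sampling interval,
provided the sampling time is small enough. -/
theorem stmt9
    {n p l : ℕ} (Rs : ℝ) (hRs : 0 < Rs)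
    (q₁ : ℝ → ℝ) (hq₁ : IsClassKInf q₁) (vs : ℝ) (hvs : 0 < vs)
    (φ : Evec n → Evec l) (W : Set (Evec l)) (wb : ℝ)
    (hWb : ∀ w ∈ W, ‖w‖ ≤ wb)
    (hφlb : ∀ y ∈ closedBall (0:Evec n) Rs, ∀ w ∈ W, q₁ ‖y‖ ≤ ⟪w, φ y⟫)
    (Lφ : ℝ)
    (hLφ : ∀ y ∈ closedBall (0:Evec n) Rs, ∀ y' ∈ closedBall (0:Evec n) Rs,
      ‖φ y - φ y'‖ ≤ Lφ * ‖y - y'‖)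
    (Γ : Matrix (Fin p) (Fin p) ℝ) (hΓ : Γ.PosDef)
    (θ θhk : Evec p) (wk : Evec l) (hwk : wk ∈ W)
    (D : Evec n → Evec n) (hDc : Continuous D) (Fb : ℝ)
    (hDb : ∀ y ∈ closedBall (0:Evec n) Rs, ‖D y‖ ≤ Fb)
    (δ : ℝ) (hδ : 0 < δ)
    (xk : Evec n) (x : ℝ → Evec n)
    (hxc : ContinuousOn x (Icc 0 δ))
    (hxball : ∀ t ∈ Icc (0:ℝ) δ, x t ∈ closedBall (0:Evec n) Rs)
    (hxeq : ∀ t ∈ Icc (0:ℝ) δ, x t = xk + ∫ s in (0:ℝ)..t, D (x s))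
    (hVc : ⟪wk, φ xk⟫ + (1/2) * ⟪θ - θhk, mVec Γ⁻¹ (θ - θhk)⟫ ≤ 3 * vs / 4)
    (hδsmall : wb * Lφ * δ * Fb ≤ vs / 4) :
    ∀ t ∈ Icc (0:ℝ) δ, q₁ ‖x t‖ ≤ vs :=
  stmt9_general Rs q₁ vs hvs φ W wb hWb hφlb Lφ hLφ Γ hΓ θ θhk wk hwk D Fb hDb δ xk x hxball hxeq
    hVc hδsmall
end
end

section
/- Let b > 0, a > 0, c > 0 with a ≤ c, and let {V_k}_{k≥0} be a sequence of nonnegative real numbers such that for every k: if V_k > b then V_{k+1} ≤ V_k − c, and if V_k ≤ b then V_{k+1} ≤ b + a. Then there exists K ≤ ⌈max(V₀ − b, 0)/c⌉ such that V_k ≤ b + a for all k ≥ K. -/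
/-!
While above `b` the sequence drops by `c` per step, so it reaches `{V ≤ b}` within
`⌈max (V₀ - b) 0 / c⌉` steps; and `{V ≤ b + a}` is forward invariant, since a step taken from
above `b` only lowers `V`.
-/

lemma le_natCeil_max_div_mul {x c : ℝ} (hc : 0 < c) : x ≤ ⌈max x 0 / c⌉₊ * c :=
  calc x ≤ max x 0 := le_max_left x 0
    _ = max x 0 / c * c := (div_mul_cancel₀ _ hc.ne').symm
    _ ≤ ⌈max x 0 / c⌉₊ * c := mul_le_mul_of_nonneg_right (Nat.le_ceil _) hc.le

lemma le_sub_mul_of_forall_lt {V : ℕ → ℝ} {b c : ℝ} (h1 : ∀ k, b < V k → V (k + 1) ≤ V k - c)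
    {n : ℕ} (hn : ∀ k < n, b < V k) : V n ≤ V 0 - n * c := by
  induction n with
  | zero => simp
  | succ n ih =>
    have hV := h1 n (hn n n.lt_succ_self)
    have ih := ih fun k hk => hn k (hk.trans n.lt_succ_self)
    push_cast
    linarith

lemma exists_le_natCeil_of_descent {V : ℕ → ℝ} {b c : ℝ} (hc : 0 < c)
    (h1 : ∀ k, b < V k → V (k + 1) ≤ V k - c) :
    ∃ k ≤ ⌈max (V 0 - b) 0 / c⌉₊, V k ≤ b := by
  by_contra! hV
  have hdescent := le_sub_mul_of_forall_lt h1 fun k hk => hV k hk.le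
  have hceil := le_natCeil_max_div_mul (x := V 0 - b) hc
  linarith [hV _ le_rfl]

theorem stmt10_general
    (b a c : ℝ) (ha : 0 < a) (hc : 0 < c)
    (V : ℕ → ℝ)
    (h1 : ∀ k, b < V k → V (k + 1) ≤ V k - c)
    (h2 : ∀ k, V k ≤ b → V (k + 1) ≤ b + a) :
    ∃ K : ℕ, K ≤ ⌈max (V 0 - b) 0 / c⌉₊ ∧ ∀ k ≥ K, V k ≤ b + a := by
  obtain ⟨K, hKN, hK⟩ := exists_le_natCeil_of_descent hc h1
  have hinvariant : ∀ k, V k ≤ b + a → V (k + 1) ≤ b + a := fun k hk => by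
    rcases le_or_gt (V k) b with hle | hgt
    · exact h2 k hle
    · linarith [h1 k hgt]
  exact ⟨K, hKN, fun k hk => Nat.le_induction (by linarith) (fun n _ => hinvariant n) k hk⟩

/-- Discrete practical-stability recursion: a nonnegative sequence that decreases by at
least `c` while above `b`, and overshoots by at most `a ≤ c` once below `b`, enters and
remains in the sublevel set `{V ≤ b + a}` within `⌈max(V₀ − b, 0)/c⌉` steps. -/
theorem stmt10
    (b a c : ℝ) (hb : 0 < b) (ha : 0 < a) (hc : 0 < c) (hac : a ≤ c)
    (V : ℕ → ℝ) (hVnn : ∀ k, 0 ≤ V k)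
    (h1 : ∀ k, b < V k → V (k + 1) ≤ V k - c)
    (h2 : ∀ k, V k ≤ b → V (k + 1) ≤ b + a) :
    ∃ K : ℕ, K ≤ ⌈max (V 0 - b) 0 / c⌉₊ ∧ ∀ k ≥ K, V k ≤ b + a :=
  stmt10_general b a c ha hc V h1 h2
end
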